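/- For every δ > 0 and A > 0 there exist constants C(δ,A) > 0 and M(δ) > 0 such that for all real numbers u ∈ [−2,2], t ∈ [−A,A], all integers N ≥ 1, and all H ∈ ℝ satisfying |Im( (u+t/N)·d(H) )| ≥ δ, one has |φ_N( (u+t/N)·d(H)·√N )| ≤ C(δ,A)·M(δ)^N·|H|^N and |φ_{N−1}( (u+t/N)·d(H)·√N )| ≤ C(δ,A)·M(δ)^{N−1}·|H|^{N−1}. -/

import Mathlib

open Real

noncomputable section

/-- The monic (probabilists') Hermite polynomial, evaluated at a complex number. -/
def hermiteH (k : ℕ) (z : ℂ) : ℂ := Polynomial.aeval z (Polynomial.hermite k)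

/-- The normalized Hermite polynomial `p_k = H_k / ((2π)^{1/4} (k!)^{1/2})`. -/
def hermiteP (k : ℕ) (z : ℂ) : ℂ :=
  hermiteH k z / (((2 * π) ^ ((1:ℝ)/4) * Real.sqrt (Nat.factorial k) : ℝ) : ℂ)

/-- The Hermite function `φ_k(z) = p_k(z) exp(−z²/4)`. -/
def hermitePhi (k : ℕ) (z : ℂ) : ℂ := hermiteP k z * Complex.exp (-(z ^ 2) / 4)

/-- The Hermite reproducing kernel `K_N(z₁,z₂) = Σ_{k<N} φ_k(z₁) φ_k(z₂)`. -/
def kernelK (N : ℕ) (z₁ z₂ : ℂ) : ℂ :=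
  ∑ k ∈ Finset.range N, hermitePhi k z₁ * hermitePhi k z₂

/-- The rescaled kernel `K̃_N(z₁,z₂,s) = s^{−1/2} K_N(z₁ s^{−1/2}, z₂ s^{−1/2})`
(principal powers). -/
def kernelKt (N : ℕ) (z₁ z₂ s : ℂ) : ℂ :=
  s ^ (-(1:ℂ)/2) * kernelK N (z₁ * s ^ (-(1:ℂ)/2)) (z₂ * s ^ (-(1:ℂ)/2))

/-- `d(H) = √(1+iH)`, the principal square root. -/
def dC (H : ℝ) : ℂ := (1 + H * Complex.I) ^ ((1:ℂ)/2)

/-- The closed strip `S̄_{α,β} = {z : |Re z| ≤ 2−α, |Im z| ≤ β}`. -/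
def Sbar (α β : ℝ) : Set ℂ := {z : ℂ | |z.re| ≤ 2 - α ∧ |z.im| ≤ β}

/-- The Wigner semicircle density. -/
def wigner (x : ℝ) : ℝ := (2 * π)⁻¹ * Real.sqrt (4 - x ^ 2)

/-- The analytic continuation of the Wigner density,
`w(z) = (2π)⁻¹ (2−z)^{1/2} (2+z)^{1/2}` (principal powers). -/
def wignerC (z : ℂ) : ℂ :=
  (((2 * π)⁻¹ : ℝ) : ℂ) * ((2 - z) ^ ((1:ℂ)/2) * (2 + z) ^ ((1:ℂ)/2))

open scoped Nat

theorem myfact (m k : ℕ) :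
    (2*m - 1)‼ * ((2*m + k).choose k) * (k ! * (2^m * m !)) = (2*m + k)! := by
  have h1 : (2*m)! = 2^m * m ! * (2*m-1)‼ := by
    cases m with
    | zero => simp
    | succ m' =>
      have e1 : 2*(m'+1) = (2*m'+1)+1 := by ring
      have e2 : 2*(m'+1) - 1 = 2*m'+1 := by omega
      rw [e2, e1, Nat.factorial_eq_mul_doubleFactorial, ← e1, Nat.doubleFactorial_two_mul]
  calc (2*m-1)‼ * ((2*m + k).choose k) * (k ! * (2^m * m !))
      = (2*m + k).choose k * k ! * (2^m * m ! * (2*m-1)‼) := by ring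
    _ = (2*m + k).choose k * (2*m)! * k ! := by rw [← h1]; ring
    _ = (2*m + k)! := Nat.add_choose_mul_factorial_mul_factorial (2*m) k

-- per-coefficient bound
theorem coeffBound (n k : ℕ) {x r : ℝ} (hx : 0 ≤ x) (hr : 0 < r) :
    (((Polynomial.hermite n).coeff k).natAbs : ℝ) * x^k
      ≤ (n ! : ℝ) / r^n * ((r*x)^k / k ! * Real.exp (r^2/2)) := by
  rcases Nat.even_or_odd (n + k) with he | ho
  · by_cases hk : n < k
    · have h0 : (Polynomial.hermite n).coeff k = 0 :=
        Polynomial.coeff_eq_zero_of_natDegree_lt (by rwa [Polynomial.natDegree_hermite])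
      rw [h0]
      simp only [Int.natAbs_zero, Nat.cast_zero, zero_mul]
      positivity
    · push_neg at hk
      obtain ⟨m, hm⟩ : ∃ m, n = 2*m + k := by
        rcases he with ⟨c, hc⟩
        exact ⟨c - k, by omega⟩
      subst hm
      rw [Polynomial.coeff_hermite_explicit]
      have hna : ((-1:ℤ) ^ m * ((2*m-1)‼ : ℤ) * ((2*m + k).choose k : ℤ)).natAbs
          = (2*m-1)‼ * (2*m + k).choose k := by
        simp [Int.natAbs_mul, Int.natAbs_pow]
      rw [hna]
      -- key identity
      have hfact := myfact m k
      have hkey : (((2*m-1)‼ * (2*m + k).choose k : ℕ) : ℝ) * x^k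
          = ((2*m+k)! : ℝ) / r^(2*m+k) * ((r*x)^k / k ! * ((r^2/2)^m / m !)) := by
        have h2 : ((2*m-1)‼ : ℝ) * ((2*m + k).choose k : ℝ) * (k ! * (2^m * m !)) = ((2*m+k)! : ℝ) := by
          exact_mod_cast congrArg (Nat.cast (R := ℝ)) hfact
        have hrne : r ≠ 0 := ne_of_gt hr
        have hkne : (k ! : ℝ) ≠ 0 := by positivity
        have hmne : (m ! : ℝ) ≠ 0 := by positivity
        rw [← h2]
        rw [pow_add, pow_mul, mul_pow, div_pow]
        push_cast
        field_simp
      rw [hkey]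
      have hle : ((r^2/2)^m / m !) ≤ Real.exp (r^2/2) :=
        Real.pow_div_factorial_le_exp (x := r^2/2) (by positivity) m
      have h1 : (0:ℝ) ≤ ((2*m+k)! : ℝ) / r^(2*m+k) := by positivity
      have h2 : (0:ℝ) ≤ (r*x)^k / k ! := by positivity
      gcongr
  · have h0 : (Polynomial.hermite n).coeff k = 0 := Polynomial.coeff_hermite_of_odd_add ho
    rw [h0]
    simp only [Int.natAbs_zero, Nat.cast_zero, zero_mul]
    positivity

theorem hermiteH_bound (n : ℕ) (z : ℂ) {r : ℝ} (hr : 0 < r) :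
    ‖hermiteH n z‖
      ≤ (n ! : ℝ) / r^n * Real.exp (r * ‖z‖ + r^2/2) := by
  have hdeg : (Polynomial.hermite n).natDegree < n + 1 := by
    rw [Polynomial.natDegree_hermite]; omega
  rw [hermiteH, Polynomial.aeval_eq_sum_range' hdeg]
  calc ‖∑ i ∈ Finset.range (n+1), (Polynomial.hermite n).coeff i • z ^ i‖
      ≤ ∑ i ∈ Finset.range (n+1), ‖(Polynomial.hermite n).coeff i • z ^ i‖ :=
        norm_sum_le _ _
    _ = ∑ i ∈ Finset.range (n+1),
          (((Polynomial.hermite n).coeff i).natAbs : ℝ) * (‖z‖) ^ i := by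
        refine Finset.sum_congr rfl fun i _ => ?_
        rw [zsmul_eq_mul, norm_mul, norm_pow]
        congr 1
        rw [Complex.norm_intCast]
        rw [Nat.cast_natAbs]
        push_cast
        simp
    _ ≤ ∑ i ∈ Finset.range (n+1),
          (n ! : ℝ) / r^n * ((r * ‖z‖)^i / i ! * Real.exp (r^2/2)) := by
        refine Finset.sum_le_sum fun i _ => ?_
        exact coeffBound n i (norm_nonneg z) hr
    _ = (n ! : ℝ) / r^n * Real.exp (r^2/2) *
          ∑ i ∈ Finset.range (n+1), (r * ‖z‖)^i / i ! := by
        rw [Finset.mul_sum]; refine Finset.sum_congr rfl fun i _ => ?_; ring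
    _ ≤ (n ! : ℝ) / r^n * Real.exp (r^2/2) * Real.exp (r * ‖z‖) := by
        have h1 : (0:ℝ) ≤ (n ! : ℝ) / r^n * Real.exp (r^2/2) := by positivity
        exact mul_le_mul_of_nonneg_left
          (Real.sum_le_exp_of_nonneg (by positivity) (n+1)) h1
    _ = (n ! : ℝ) / r^n * Real.exp (r * ‖z‖ + r^2/2) := by
        rw [Real.exp_add]; ring

theorem hermiteP_bound (k : ℕ) (z : ℂ) {q B : ℝ} (hq : 1 ≤ q) (hB : 0 ≤ B)
    (hz : k ≠ 0 → ‖z‖ ≤ B * q * Real.sqrt k) :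
    ‖hermiteP k z‖ ≤ q^k * Real.exp ((B+1) * k) := by
  have hpi : (1:ℝ) ≤ (2 * π) ^ ((1:ℝ)/4) := by
    apply Real.one_le_rpow (by nlinarith [Real.pi_gt_three]) (by norm_num)
  have hq0 : 0 < q := lt_of_lt_of_le one_pos hq
  have hfac0 : (0:ℝ) < Real.sqrt (k !) := Real.sqrt_pos.mpr (by positivity)
  have hPabs : ‖hermiteP k z‖
      = ‖hermiteH k z‖ / ((2 * π) ^ ((1:ℝ)/4) * Real.sqrt (k !)) := by
    rw [hermiteP, norm_div, Complex.norm_real, Real.norm_eq_abs, abs_of_pos (by positivity)]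
  by_cases hk : k = 0
  · subst hk
    have h0 : hermiteH 0 z = 1 := by
      simp [hermiteH, Polynomial.hermite]
    rw [hPabs, h0]
    simp only [map_one, norm_one, Nat.factorial_zero, Nat.cast_one, Real.sqrt_one, mul_one,
      pow_zero, Nat.cast_zero, mul_zero, Real.exp_zero]
    rw [div_le_one (by positivity)]
    exact hpi
  · have hkpos : 0 < (k:ℝ) := by exact_mod_cast Nat.pos_of_ne_zero hk
    set r : ℝ := Real.sqrt k / q with hrdef
    have hr : 0 < r := by positivity
    have hb := hermiteH_bound k z hr
    -- bound the exponent
    have hexp : r * ‖z‖ + r^2/2 ≤ (B+1) * k := by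
      have hqne : q ≠ 0 := ne_of_gt hq0
      have h1 : r * ‖z‖ ≤ B * k := by
        calc r * ‖z‖ ≤ r * (B * q * Real.sqrt k) := by
              exact mul_le_mul_of_nonneg_left (hz hk) hr.le
          _ = B * k := by
              rw [hrdef]
              field_simp
              linear_combination B * Real.mul_self_sqrt hkpos.le
      have h2 : r^2/2 ≤ (k:ℝ) := by
        have : r^2 = (k:ℝ) / q^2 := by
          rw [hrdef, div_pow, Real.sq_sqrt hkpos.le]
        rw [this]
        have hq2 : 1 ≤ q^2 := by nlinarith
        have : (k:ℝ)/q^2 ≤ k := by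
          rw [div_le_iff₀ (by positivity)]; nlinarith
        linarith
      nlinarith
    have hb2 : ‖hermiteH k z‖ ≤ (k ! : ℝ) / r^k * Real.exp ((B+1)*k) := by
      refine hb.trans ?_
      have : (0:ℝ) ≤ (k ! : ℝ) / r^k := by positivity
      exact mul_le_mul_of_nonneg_left (Real.exp_le_exp.mpr hexp) this
    rw [hPabs]
    set E := Real.exp ((B+1)*k) with hE
    have hE0 : 0 < E := Real.exp_pos _
    have hsk : 0 < Real.sqrt k := Real.sqrt_pos.mpr hkpos
    have hsqpow : Real.sqrt ((k:ℝ)^k) = (Real.sqrt k)^k := by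
      rw [show ((k:ℝ))^k = ((Real.sqrt k ^ 2))^k by rw [Real.sq_sqrt hkpos.le],
        ← pow_mul, mul_comm 2 k, pow_mul, Real.sqrt_sq (by positivity)]
    have hfacle : Real.sqrt (k !) ≤ (Real.sqrt k)^k := by
      rw [← hsqpow]
      exact Real.sqrt_le_sqrt (by exact_mod_cast Nat.factorial_le_pow k)
    have hrk : q^k * r^k = (Real.sqrt k)^k := by
      rw [hrdef, div_pow]
      field_simp
    calc ‖hermiteH k z‖ / ((2 * π) ^ ((1:ℝ)/4) * Real.sqrt (k !))
        ≤ ‖hermiteH k z‖ / Real.sqrt (k !) := by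
          apply div_le_div_of_nonneg_left (norm_nonneg _) hfac0
          exact le_mul_of_one_le_left hfac0.le hpi
      _ ≤ ((k ! : ℝ) / r^k * E) / Real.sqrt (k !) := by gcongr
      _ = ((k ! : ℝ) / Real.sqrt (k !)) * E / r^k := by ring
      _ = Real.sqrt (k !) * E / r^k := by rw [Real.div_sqrt]
      _ ≤ q^k * E := by
          rw [div_le_iff₀ (by positivity)]
          calc Real.sqrt (k !) * E ≤ (Real.sqrt k)^k * E := by gcongr
            _ = q^k * E * r^k := by rw [← hrk]; ring

set_option maxHeartbeats 2000000 in
theorem hermite_function_bound_path :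
    ∀ δ : ℝ, 0 < δ → ∀ A : ℝ, 0 < A → ∃ C : ℝ, 0 < C ∧ ∃ M : ℝ, 0 < M ∧
      ∀ u ∈ Set.Icc (-2:ℝ) 2, ∀ t ∈ Set.Icc (-A) A, ∀ N : ℕ, 1 ≤ N → ∀ H : ℝ,
        δ ≤ |(((u + t / N : ℝ) : ℂ) * dC H).im| →
          ‖hermitePhi N (((u + t / N : ℝ) : ℂ) * dC H * (Real.sqrt N : ℝ))‖ ≤
            C * M ^ N * |H| ^ N ∧
          ‖hermitePhi (N-1) (((u + t / N : ℝ) : ℂ) * dC H * (Real.sqrt N : ℝ))‖ ≤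
            C * M ^ (N-1) * |H| ^ (N-1) := by
  intro δ hδ A hA
  set c₀ : ℝ := 2*δ/(2+A) with hc₀def
  have hc₀ : 0 < c₀ := by positivity
  set K : ℝ := Real.sqrt (1 + 1/c₀^2) with hKdef
  have hK0 : 0 < K := Real.sqrt_pos.mpr (by positivity)
  set B : ℝ := (2+A) * Real.sqrt 2 with hBdef
  have hB0 : 0 < B := by positivity
  set M : ℝ := K * Real.exp (B+1) with hMdef
  refine ⟨1, one_pos, M, by positivity, ?_⟩
  intro u hu t ht N hN H hIm
  set u' : ℝ := u + t / N with hu'def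
  set d : ℂ := dC H with hddef
  -- d squared
  have hne : ((2:ℕ) : ℕ) ≠ 0 := two_ne_zero
  have hd2 : d^2 = 1 + H * Complex.I := by
    rw [hddef, dC, show ((1:ℂ)/2) = (((2:ℕ):ℂ))⁻¹ by norm_num]
    exact Complex.cpow_nat_inv_pow _ two_ne_zero
  have hre : d.re * d.re - d.im * d.im = 1 := by
    have := congrArg Complex.re hd2
    simpa [pow_two, Complex.mul_re] using this
  have him : d.re * d.im + d.im * d.re = H := by
    have := congrArg Complex.im hd2
    simpa [pow_two, Complex.mul_im] using this
  -- |d| = q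
  set q : ℝ := Real.sqrt (Real.sqrt (1 + H^2)) with hqdef
  have h1H : (1:ℝ) ≤ 1 + H^2 := by nlinarith
  have hq1 : 1 ≤ q := by
    have h1 : (1:ℝ) ≤ Real.sqrt (1+H^2) := by
      have h2 := Real.sqrt_le_sqrt h1H
      rwa [Real.sqrt_one] at h2
    have h3 := Real.sqrt_le_sqrt h1
    rwa [Real.sqrt_one] at h3
  have hq0 : 0 < q := lt_of_lt_of_le one_pos hq1
  have habsd : ‖d‖ = q := by
    have h1 : (‖d‖)^2 = Real.sqrt (1 + H^2) := by
      rw [← norm_pow, hd2]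
      rw [show (1 + H * Complex.I) = ((1:ℝ):ℂ) + (H:ℝ) * Complex.I by push_cast; ring]
      rw [Complex.norm_add_mul_I]
      norm_num
    have h2 : q^2 = Real.sqrt (1 + H^2) := Real.sq_sqrt (Real.sqrt_nonneg _)
    nlinarith [norm_nonneg d, hq0]
  -- bounds on u'
  have hNpos : (0:ℝ) < N := by exact_mod_cast hN
  have hu'le : |u'| ≤ 2 + A := by
    have h1 : |u| ≤ 2 := abs_le.mpr ⟨hu.1, hu.2⟩
    have h2 : |t| ≤ A := abs_le.mpr ⟨ht.1, ht.2⟩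
    have h3 : |t / (N:ℝ)| ≤ A := by
      rw [abs_div, abs_of_pos hNpos]
      calc |t| / (N:ℝ) ≤ |t| / 1 := by
            apply div_le_div_of_nonneg_left (abs_nonneg t) one_pos ?_
            exact_mod_cast hN
        _ = |t| := div_one _
        _ ≤ A := h2
    calc |u'| ≤ |u| + |t/(N:ℝ)| := abs_add_le _ _
      _ ≤ 2 + A := add_le_add h1 h3
  -- hypothesis gives lower bound on |d.im| and |H|
  have hIm' : δ ≤ |u'| * |d.im| := by
    have : ((u' : ℝ) : ℂ) * d = (u' : ℂ) * d := rfl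
    have him2 : (((u' : ℝ) : ℂ) * d).im = u' * d.im := by
      simp [Complex.mul_im]
    rw [him2] at hIm
    rwa [abs_mul] at hIm
  have hdim : δ / (2+A) ≤ |d.im| := by
    rw [div_le_iff₀ (by positivity)]
    nlinarith [hIm', hu'le, abs_nonneg d.im, abs_nonneg u']
  have hdre : 1 ≤ |d.re| := by
    have h5 : 1 ≤ d.re * d.re := by nlinarith [mul_self_nonneg d.im]
    have h6 := abs_mul_abs_self d.re
    nlinarith [abs_nonneg d.re]
  have hH : c₀ ≤ |H| := by
    have hHeq : |H| = 2 * (|d.re| * |d.im|) := by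
      rw [show H = 2 * (d.re * d.im) by linarith [him]]
      rw [abs_mul, abs_mul]
      norm_num
    have h8 : δ ≤ (2+A) * |d.im| := by nlinarith [hIm', hu'le, abs_nonneg d.im]
    have h9 : δ ≤ (2+A) * |d.im| * |d.re| := by
      have h10 : (2+A) * |d.im| * 1 ≤ (2+A) * |d.im| * |d.re| :=
        mul_le_mul_of_nonneg_left hdre (by positivity)
      linarith [h10]
    rw [hHeq, hc₀def]
    rw [div_le_iff₀ (by positivity)]
    nlinarith [h9]
  have hH0 : 0 < |H| := lt_of_lt_of_le hc₀ hH
  -- q ≤ K * |H|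
  have hqK : q ≤ K * |H| := by
    have hsq : q^2 ≤ (K * |H|)^2 := by
      have e1 : q^2 = Real.sqrt (1 + H^2) := Real.sq_sqrt (Real.sqrt_nonneg _)
      have e2 : Real.sqrt (1 + H^2) ≤ 1 + H^2 := by
        calc Real.sqrt (1 + H^2) ≤ Real.sqrt ((1+H^2)^2) := by
              apply Real.sqrt_le_sqrt; nlinarith
          _ = 1 + H^2 := Real.sqrt_sq (by positivity)
      have e3 : (1:ℝ) + H^2 ≤ (1 + 1/c₀^2) * H^2 := by
        have : c₀^2 ≤ H^2 := by nlinarith [abs_nonneg H, sq_abs H]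
        have h4 : (1:ℝ) ≤ H^2/c₀^2 := by
          rw [le_div_iff₀ (by positivity)]; linarith
        have h5 : H^2/c₀^2 = (1/c₀^2) * H^2 := by ring
        nlinarith [sq_nonneg H]
      have e4 : (K * |H|)^2 = (1 + 1/c₀^2) * H^2 := by
        rw [mul_pow, hKdef, Real.sq_sqrt (by positivity), sq_abs]
      linarith [e1, e2, e3, e4.symm.le]
    calc q = Real.sqrt (q^2) := (Real.sqrt_sq hq0.le).symm
      _ ≤ Real.sqrt ((K*|H|)^2) := Real.sqrt_le_sqrt hsq
      _ = K * |H| := Real.sqrt_sq (by positivity)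
  -- the evaluation point
  set z : ℂ := ((u' : ℝ) : ℂ) * d * ((Real.sqrt N : ℝ) : ℂ) with hzdef
  have habsz : ‖z‖ = |u'| * q * Real.sqrt N := by
    rw [hzdef, norm_mul, norm_mul, Complex.norm_real, Complex.norm_real, habsd, Real.norm_eq_abs, Real.norm_eq_abs,
      abs_of_nonneg (Real.sqrt_nonneg _)]
  -- exp factor ≤ 1
  have hexp1 : ‖Complex.exp (-(z^2)/4)‖ ≤ 1 := by
    have hz2 : -(z^2)/4 = ((-(u'^2 * N)/4 : ℝ) : ℂ) * (1 + H * Complex.I) := by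
      rw [hzdef]
      have hsqN : ((Real.sqrt N : ℝ) : ℂ)^2 = (N : ℂ) := by
        rw [← Complex.ofReal_pow, Real.sq_sqrt (Nat.cast_nonneg N)]
        push_cast; ring
      have : (((u' : ℝ) : ℂ) * d * ((Real.sqrt N : ℝ) : ℂ))^2
          = ((u' : ℝ) : ℂ)^2 * ((Real.sqrt N : ℝ) : ℂ)^2 * d^2 := by ring
      rw [this, hsqN, hd2]
      push_cast; ring
    rw [Complex.norm_exp, hz2]
    have hre2 : (((-(u'^2 * N)/4 : ℝ) : ℂ) * (1 + H * Complex.I)).re = -(u'^2 * N)/4 := by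
      rw [Complex.re_ofReal_mul]
      simp
    rw [hre2]
    rw [Real.exp_le_one_iff, neg_div]
    exact neg_nonpos.mpr (by positivity)
  -- generic single-k bound
  have main : ∀ k : ℕ, (k ≠ 0 → ‖z‖ ≤ B * q * Real.sqrt k) →
      ‖hermitePhi k z‖ ≤ 1 * M^k * |H|^k := by
    intro k hk
    have hp := hermiteP_bound k z hq1 hB0.le hk
    calc ‖hermitePhi k z‖
        = ‖hermiteP k z‖ * ‖Complex.exp (-(z^2)/4)‖ := by
          rw [hermitePhi, norm_mul]
      _ ≤ ‖hermiteP k z‖ * 1 := by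
          exact mul_le_mul_of_nonneg_left hexp1 (norm_nonneg _)
      _ = ‖hermiteP k z‖ := mul_one _
      _ ≤ q^k * Real.exp ((B+1) * k) := hp
      _ ≤ (K * |H|)^k * Real.exp ((B+1) * k) := by
          apply mul_le_mul_of_nonneg_right (pow_le_pow_left₀ hq0.le hqK k) (Real.exp_pos _).le
      _ = 1 * M^k * |H|^k := by
          rw [hMdef, show ((B+1) * (k:ℝ)) = (k:ℝ) * (B+1) by ring, Real.exp_nat_mul]
          rw [mul_pow, mul_pow]
          ring
  constructor
  · apply main
    intro _
    rw [habsz]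
    have h2 : (1:ℝ) ≤ Real.sqrt 2 := by
      rw [show (1:ℝ) = Real.sqrt 1 by simp]
      exact Real.sqrt_le_sqrt (by norm_num)
    calc |u'| * q * Real.sqrt N ≤ (2+A) * q * Real.sqrt N := by
          apply mul_le_mul_of_nonneg_right (mul_le_mul_of_nonneg_right hu'le hq0.le)
            (Real.sqrt_nonneg _)
      _ ≤ B * q * Real.sqrt N := by
          rw [hBdef]
          have h3 : (2+A) ≤ (2+A)*Real.sqrt 2 := le_mul_of_one_le_right (by positivity) h2
          exact mul_le_mul_of_nonneg_right
            (mul_le_mul_of_nonneg_right h3 hq0.le) (Real.sqrt_nonneg _)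
  · apply main
    intro hk
    rw [habsz]
    have hN2 : 2 ≤ N := by omega
    have hcast : ((N - 1 : ℕ) : ℝ) = (N:ℝ) - 1 := by
      rw [Nat.cast_sub hN]; norm_num
    have hsqle : Real.sqrt N ≤ Real.sqrt 2 * Real.sqrt ((N-1 : ℕ) : ℝ) := by
      rw [← Real.sqrt_mul (by norm_num), hcast]
      apply Real.sqrt_le_sqrt
      have : (2:ℝ) ≤ N := by exact_mod_cast hN2
      nlinarith
    calc |u'| * q * Real.sqrt N ≤ (2+A) * q * Real.sqrt N := by
          apply mul_le_mul_of_nonneg_right (mul_le_mul_of_nonneg_right hu'le hq0.le)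
            (Real.sqrt_nonneg _)
      _ ≤ (2+A) * q * (Real.sqrt 2 * Real.sqrt ((N-1:ℕ):ℝ)) := by
          apply mul_le_mul_of_nonneg_left hsqle (by positivity)
      _ = B * q * Real.sqrt ((N-1:ℕ):ℝ) := by rw [hBdef]; ring

end
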